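/- Let A_N' be the matrix obtained from A_N by additionally setting the (1,1) and (2^N, 2^N) diagonal entries to 1 (corresponding to adding self-loops at the vertices 0 and 1 of the Preisach transition graph). Then the characteristic polynomial of A_N' equals χ_N'(λ) = (2-λ)·U_N(-λ/2)·Π_{i=0}^{N-1} (U_i(-λ/2))^{2^{N-i-1}} for N ≥ 1. -/

import Mathlib

open Matrix Polynomial

/-- `J_k = diag(1,0,...,0)` of order `2^k`. -/
noncomputable def Jmat (k : ℕ) : Matrix (Fin (2 ^ k)) (Fin (2 ^ k)) ℝ :=
  Matrix.diagonal (fun i => if (i : ℕ) = 0 then 1 else 0)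

/-- `J_k' = diag(0,...,0,1)` of order `2^k`. -/
noncomputable def Jmat' (k : ℕ) : Matrix (Fin (2 ^ k)) (Fin (2 ^ k)) ℝ :=
  Matrix.diagonal (fun i => if (i : ℕ) = 2 ^ k - 1 then 1 else 0)

/-- The equivalence identifying `Fin (2^k) ⊕ Fin (2^k)` with `Fin (2^(k+1))`. -/
def blockEquiv (k : ℕ) : Fin (2 ^ k) ⊕ Fin (2 ^ k) ≃ Fin (2 ^ (k + 1)) :=
  finSumFinEquiv.trans (finCongr (by rw [pow_succ, mul_two]))

/-- The adjacency matrices `A_k`, defined recursively by `A_0 = (0)` and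
`A_{k+1} = [[A_k, J_k], [J_k', A_k]]` in block form. -/
noncomputable def Amat : (k : ℕ) → Matrix (Fin (2 ^ k)) (Fin (2 ^ k)) ℝ
  | 0 => 0
  | (k + 1) => Matrix.reindex (blockEquiv k) (blockEquiv k)
      (Matrix.fromBlocks (Amat k) (Jmat k) (Jmat' k) (Amat k))

/-- `T_k = A_k - λ I`. -/
noncomputable def Tmat (k : ℕ) (l : ℝ) : Matrix (Fin (2 ^ k)) (Fin (2 ^ k)) ℝ :=
  Amat k - l • 1

/-- Characteristic polynomial value `χ_k(λ) = det (A_k - λ I)`. -/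
noncomputable def chiA (k : ℕ) (l : ℝ) : ℝ := (Tmat k l).det

/-- Submatrix obtained by deleting the top row and the rightmost column. -/
noncomputable def delTopRight {n : ℕ} (M : Matrix (Fin n) (Fin n) ℝ) :
    Matrix (Fin (n - 1)) (Fin (n - 1)) ℝ :=
  Matrix.of fun i j => M ⟨i.1 + 1, by have := i.isLt; omega⟩ ⟨j.1, by have := j.isLt; omega⟩

/-- Submatrix obtained by deleting the bottom row and the rightmost column. -/
noncomputable def delBotRight {n : ℕ} (M : Matrix (Fin n) (Fin n) ℝ) :
    Matrix (Fin (n - 1)) (Fin (n - 1)) ℝ :=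
  Matrix.of fun i j => M ⟨i.1, by have := i.isLt; omega⟩ ⟨j.1, by have := j.isLt; omega⟩

/-- `φ_k = det Q_k`, where `Q_k` is `T_k` with top row and right column deleted. -/
noncomputable def phiA (k : ℕ) (l : ℝ) : ℝ := (delTopRight (Tmat k l)).det

/-- `ψ_k = det P_k`, where `P_k` is `T_k` with bottom row and right column deleted. -/
noncomputable def psiA (k : ℕ) (l : ℝ) : ℝ := (delBotRight (Tmat k l)).det

/-- `A_N' = A_N + diag(1,0,...,0,1)` (self-loops at the extreme states). -/
noncomputable def Amat' (N : ℕ) : Matrix (Fin (2 ^ N)) (Fin (2 ^ N)) ℝ :=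
  Amat N + Matrix.diagonal (fun i : Fin (2 ^ N) => if (i : ℕ) = 0 ∨ (i : ℕ) = 2 ^ N - 1 then 1 else 0)

/-!
Write `T_k = A_k - λ`, `x = -λ/2` and `P_k = ∏_{i<k} U_i(x)^(2^(k-i-1))`. Since
`T_{k+1} = [[T_k, J_k], [J_k', T_k]]` has rank-one off-diagonal blocks, its determinant is
`det T_k ^ 2` minus the product of the two off-diagonal corner cofactors of `T_k`, and its corner
cofactors are products of corner cofactors and determinants of `T_k`. By induction,
`det T_k = U_{k+1}(x) P_k`, both diagonal corner cofactors equal `U_k(x) P_k`, and the two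
off-diagonal ones multiply to `P_k ^ 2`; each step is the Cassini-type identity
`U_k² + U_{k+1}² - 2x U_k U_{k+1} = 1`. The matrix `A_{k+1}' - λ` has the same block shape with
diagonal blocks `T_k + J_k` and `T_k + J_k'`, whose determinants are `det T_k` plus a corner
cofactor, and the same identity turns the result into `(2 - λ) U_{k+1}(x) P_{k+1}`.
-/

section RowUpdates

variable {l m n o α : Type*}

theorem Matrix.fromBlocks_updateRow_inl [DecidableEq n] [DecidableEq o] (A : Matrix n l α)
    (B : Matrix n m α) (C : Matrix o l α) (D : Matrix o m α) (i : n) (u : l → α)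
    (v : m → α) :
    (fromBlocks A B C D).updateRow (Sum.inl i) (Sum.elim u v) =
      fromBlocks (A.updateRow i u) (B.updateRow i v) C D := by
  ext (a | a) (b | b) <;> simp only [updateRow_apply] <;> split_ifs <;> simp_all

theorem Matrix.fromBlocks_updateRow_inr [DecidableEq n] [DecidableEq o] (A : Matrix n l α)
    (B : Matrix n m α) (C : Matrix o l α) (D : Matrix o m α) (i : o) (u : l → α)
    (v : m → α) :
    (fromBlocks A B C D).updateRow (Sum.inr i) (Sum.elim u v) =
      fromBlocks A B (C.updateRow i u) (D.updateRow i v) := by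
  ext (a | a) (b | b) <;> simp only [updateRow_apply] <;> split_ifs <;> simp_all

theorem Matrix.single_updateRow_self [DecidableEq m] [DecidableEq n] [Zero α] (i : m) (j : n)
    (c : α) (v : n → α) : (single i j c).updateRow i v = updateRow 0 i v := by
  rw [single_eq_updateRow_zero, updateRow_idem]

theorem Matrix.add_single_eq_updateRow [DecidableEq n] [Semiring α] (A : Matrix n n α)
    (i j : n) (c : α) :
    A + single i j c = A.updateRow i (A i + c • Pi.single j 1) := by
  ext a b
  rcases eq_or_ne a i with rfl | h
  · simp [single_apply, Pi.single_apply, eq_comm]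
  · simp [updateRow_apply, h, Ne.symm h]

end RowUpdates

section BlockDeterminants

variable {R n m : Type*} [CommRing R] [Fintype n] [Fintype m] [DecidableEq n] [DecidableEq m]

theorem Matrix.adjugate_updateRow_apply (A : Matrix n n R) (i j : n) (v : n → R) :
    (A.updateRow i v).adjugate j i = A.adjugate j i := by
  rw [adjugate_apply, adjugate_apply, updateRow_idem]

theorem Matrix.det_add_single (A : Matrix n n R) (i j : n) (c : R) :
    (A + single i j c).det = A.det + c * A.adjugate j i := by
  rw [add_single_eq_updateRow, det_updateRow_add, updateRow_eq_self, det_updateRow_smul,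
    adjugate_apply]

theorem Matrix.adjugate_add_single_apply (A : Matrix n n R) (i j k : n) (c : R) :
    (A + single i j c).adjugate k i = A.adjugate k i := by
  rw [add_single_eq_updateRow, adjugate_updateRow_apply]

theorem Matrix.det_eq_det_updateRow_add_det_updateRow (M : Matrix n n R) (r : n) (u v : n → R)
    (h : M r = u + v) : M.det = (M.updateRow r u).det + (M.updateRow r v).det := by
  rw [← det_updateRow_add, ← h, updateRow_eq_self]

variable (A : Matrix n n R) (D : Matrix m m R) (i j' : n) (i' j : m)

theorem Matrix.det_fromBlocks_updateRow_zero_single_single :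
    (fromBlocks (A.updateRow i 0) (single i i' 1) (single j j' 1) (D.updateRow j 0)).det =
      -(A.adjugate j' i * D.adjugate i' j) := by
  have hswap : (fromBlocks (A.updateRow i 0) (single i i' 1) (single j j' 1)
      (D.updateRow j 0)).submatrix (Equiv.swap (Sum.inl i) (Sum.inr j)) id =
      fromBlocks (A.updateRow i (Pi.single j' 1)) 0 0 (D.updateRow j (Pi.single i' 1)) := by
    ext (a | a) (b | b) <;>
      simp only [submatrix_apply, id_eq, Equiv.swap_apply_def] <;>
      split_ifs <;> simp_all [single_apply, Pi.single_apply, eq_comm]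
  have hperm := det_permute (Equiv.swap (Sum.inl i) (Sum.inr j))
    (fromBlocks (A.updateRow i 0) (single i i' 1) (single j j' 1) (D.updateRow j 0))
  rw [hswap, Equiv.Perm.sign_swap Sum.inl_ne_inr, det_fromBlocks_zero₂₁, ← adjugate_apply,
    ← adjugate_apply] at hperm
  push_cast at hperm
  linear_combination hperm

theorem Matrix.det_fromBlocks_single_single :
    (fromBlocks A (single i i' 1) (single j j' 1) D).det =
      A.det * D.det - A.adjugate j' i * D.adjugate i' j := by
  have hexpand_j : (fromBlocks A (single i i' 1) (single j j' 1) D).det =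
      (fromBlocks A (single i i' 1) (single j j' 1) (D.updateRow j 0)).det + A.det * D.det := by
    have hrow : fromBlocks A (single i i' 1) (single j j' 1) D (Sum.inr j) =
        Sum.elim (Pi.single j' 1) 0 + Sum.elim (0 : n → R) (D j) := by
      ext (b | b) <;> simp [single_apply, Pi.single_apply, eq_comm]
    rw [det_eq_det_updateRow_add_det_updateRow _ _ _ _ hrow, fromBlocks_updateRow_inr,
      fromBlocks_updateRow_inr, single_updateRow_self, ← single_eq_updateRow_zero,
      single_updateRow_self, updateRow_zero_zero, updateRow_eq_self, det_fromBlocks_zero₂₁]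
  have hexpand_i : (fromBlocks A (single i i' 1) (single j j' 1) (D.updateRow j 0)).det =
      (fromBlocks (A.updateRow i 0) (single i i' 1) (single j j' 1) (D.updateRow j 0)).det := by
    have hrow : fromBlocks A (single i i' 1) (single j j' 1) (D.updateRow j 0) (Sum.inl i) =
        Sum.elim (A i) 0 + Sum.elim (0 : n → R) (Pi.single i' 1) := by
      ext (b | b) <;> simp [single_apply, Pi.single_apply, eq_comm]
    rw [det_eq_det_updateRow_add_det_updateRow _ _ _ _ hrow, fromBlocks_updateRow_inl,
      fromBlocks_updateRow_inl, single_updateRow_self, updateRow_zero_zero, updateRow_eq_self,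
      single_updateRow_self, ← single_eq_updateRow_zero, det_fromBlocks_zero₁₂,
      det_eq_zero_of_row_eq_zero j (fun _ => by simp), mul_zero, zero_add]
  rw [hexpand_j, hexpand_i, det_fromBlocks_updateRow_zero_single_single]
  ring

theorem Matrix.adjugate_fromBlocks_single_single_inl_inl (r : n) :
    (fromBlocks A (single i i' 1) (single j j' 1) D).adjugate (Sum.inl r) (Sum.inl i) =
      A.adjugate r i * D.det := by
  rw [adjugate_apply, ← Sum.elim_single_zero, fromBlocks_updateRow_inl, single_updateRow_self,
    updateRow_zero_zero, det_fromBlocks_zero₁₂, ← adjugate_apply]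

theorem Matrix.adjugate_fromBlocks_single_single_inr_inr (r : m) :
    (fromBlocks A (single i i' 1) (single j j' 1) D).adjugate (Sum.inr r) (Sum.inr j) =
      A.det * D.adjugate r j := by
  rw [adjugate_apply, ← Sum.elim_zero_single, fromBlocks_updateRow_inr, single_updateRow_self,
    updateRow_zero_zero, det_fromBlocks_zero₂₁, ← adjugate_apply]

theorem Matrix.adjugate_fromBlocks_single_single_inr_inl (r : m) :
    (fromBlocks A (single i i' 1) (single j j' 1) D).adjugate (Sum.inr r) (Sum.inl i) =
      -(A.adjugate j' i * D.adjugate r j) := by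
  rw [adjugate_apply, ← Sum.elim_zero_single, fromBlocks_updateRow_inl, single_updateRow_self,
    ← single_eq_updateRow_zero, det_fromBlocks_single_single, adjugate_updateRow_apply,
    det_eq_zero_of_row_eq_zero i (fun _ => by simp)]
  ring

theorem Matrix.adjugate_fromBlocks_single_single_inl_inr (r : n) :
    (fromBlocks A (single i i' 1) (single j j' 1) D).adjugate (Sum.inl r) (Sum.inr j) =
      -(A.adjugate r i * D.adjugate i' j) := by
  rw [adjugate_apply, ← Sum.elim_single_zero, fromBlocks_updateRow_inr, single_updateRow_self,
    ← single_eq_updateRow_zero, det_fromBlocks_single_single, adjugate_updateRow_apply,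
    det_eq_zero_of_row_eq_zero j (fun _ => by simp)]
  ring

end BlockDeterminants

open Polynomial.Chebyshev

section Chebyshev

theorem Polynomial.Chebyshev.U_sq_add_U_sq (R : Type*) [CommRing R] (n : ℤ) :
    U R n ^ 2 + U R (n + 1) ^ 2 - 2 * X * U R n * U R (n + 1) = 1 := by
  have h := congrArg (fun p => p.comp (2 * X)) (S_sq_add_S_sq R n)
  simp only [sub_comp, add_comp, pow_comp, mul_comp, X_comp, one_comp, S_comp_two_mul_X] at h
  linear_combination h

variable {R : Type*} [CommRing R]

theorem Polynomial.Chebyshev.U_eval_sq_add_U_eval_sq (x : R) (n : ℤ) :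
    (U R n).eval x ^ 2 + (U R (n + 1)).eval x ^ 2 -
      2 * x * (U R n).eval x * (U R (n + 1)).eval x = 1 := by
  simpa using congrArg (eval x) (U_sq_add_U_sq R n)

noncomputable def chebyshevUProd (x : R) (N : ℕ) : R :=
  ∏ i ∈ Finset.range N, (U R i).eval x ^ 2 ^ (N - i - 1)

theorem chebyshevUProd_zero (x : R) : chebyshevUProd x 0 = 1 := by
  simp [chebyshevUProd]

theorem chebyshevUProd_succ (x : R) (k : ℕ) :
    chebyshevUProd x (k + 1) = (U R k).eval x * chebyshevUProd x k ^ 2 := by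
  rw [chebyshevUProd, chebyshevUProd, Finset.prod_range_succ, ← Finset.prod_pow, mul_comm]
  rw [show k + 1 - k - 1 = 0 by omega, pow_zero, pow_one]
  congr 1
  refine Finset.prod_congr rfl fun i hi => ?_
  rw [← pow_mul, ← pow_succ, show k + 1 - i - 1 = k - i - 1 + 1 by
    have := Finset.mem_range.mp hi; omega]

end Chebyshev

def firstState (k : ℕ) : Fin (2 ^ k) := ⟨0, Nat.two_pow_pos k⟩

def lastState (k : ℕ) : Fin (2 ^ k) := ⟨2 ^ k - 1, Nat.sub_lt (Nat.two_pow_pos k) one_pos⟩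

theorem Jmat_eq_single (k : ℕ) : Jmat k = single (firstState k) (firstState k) 1 := by
  rw [Jmat, ← diagonal_single]
  congr 1
  ext i
  simp only [Pi.single_apply, Fin.ext_iff, firstState]

theorem Jmat'_eq_single (k : ℕ) : Jmat' k = single (lastState k) (lastState k) 1 := by
  rw [Jmat', ← diagonal_single]
  congr 1
  ext i
  simp only [Pi.single_apply, Fin.ext_iff, lastState]

theorem blockEquiv_inl_val (k : ℕ) (x : Fin (2 ^ k)) : (blockEquiv k (Sum.inl x) : ℕ) = x := rfl

theorem blockEquiv_inr_val (k : ℕ) (x : Fin (2 ^ k)) :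
    (blockEquiv k (Sum.inr x) : ℕ) = 2 ^ k + x := rfl

theorem blockEquiv_symm_firstState (k : ℕ) :
    (blockEquiv k).symm (firstState (k + 1)) = Sum.inl (firstState k) := by
  rw [Equiv.symm_apply_eq]
  rfl

theorem blockEquiv_symm_lastState (k : ℕ) :
    (blockEquiv k).symm (lastState (k + 1)) = Sum.inr (lastState k) := by
  rw [Equiv.symm_apply_eq, Fin.ext_iff, blockEquiv_inr_val]
  have := Nat.two_pow_pos k
  simp only [lastState, pow_succ]
  omega

theorem Tmat_succ (k : ℕ) (l : ℝ) :
    Tmat (k + 1) l = (fromBlocks (Tmat k l) (Jmat k) (Jmat' k) (Tmat k l)).submatrix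
      (blockEquiv k).symm (blockEquiv k).symm := by
  have hblocks : fromBlocks (Tmat k l) (Jmat k) (Jmat' k) (Tmat k l) =
      fromBlocks (Amat k) (Jmat k) (Jmat' k) (Amat k) - l • 1 := by
    rw [← fromBlocks_one, fromBlocks_smul, sub_eq_add_neg, fromBlocks_neg, fromBlocks_add]
    simp [Tmat, sub_eq_add_neg]
  rw [hblocks, Tmat, Amat, reindex_apply, ← submatrix_one_equiv (blockEquiv k).symm]
  rfl

theorem Amat'_sub_smul_one_succ (k : ℕ) (l : ℝ) :
    Amat' (k + 1) - l • 1 = (fromBlocks (Tmat k l + Jmat k) (Jmat k) (Jmat' k)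
      (Tmat k l + Jmat' k)).submatrix (blockEquiv k).symm (blockEquiv k).symm := by
  have hdiag : diagonal (fun i : Fin (2 ^ (k + 1)) =>
      if (i : ℕ) = 0 ∨ (i : ℕ) = 2 ^ (k + 1) - 1 then (1 : ℝ) else 0) =
        (fromBlocks (Jmat k) 0 0 (Jmat' k)).submatrix (blockEquiv k).symm (blockEquiv k).symm := by
    rw [Jmat, Jmat', fromBlocks_diagonal, submatrix_diagonal_equiv]
    congr 1
    ext i
    obtain ⟨x | x, rfl⟩ := (blockEquiv k).surjective i <;>
      simp only [Function.comp_apply, Equiv.symm_apply_apply, Sum.elim_inl, Sum.elim_inr,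
        blockEquiv_inl_val, blockEquiv_inr_val, pow_succ] <;> grind
  have hblocks : fromBlocks (Tmat k l + Jmat k) (Jmat k) (Jmat' k) (Tmat k l + Jmat' k) =
      fromBlocks (Tmat k l) (Jmat k) (Jmat' k) (Tmat k l) +
        fromBlocks (Jmat k) 0 0 (Jmat' k) := by
    rw [fromBlocks_add]
    simp
  rw [hblocks, Amat', add_sub_right_comm, ← Tmat, hdiag, Tmat_succ]
  rfl

section Recursion

variable (k : ℕ) (l : ℝ)

theorem det_Tmat_succ :
    (Tmat (k + 1) l).det = (Tmat k l).det ^ 2 -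
      (Tmat k l).adjugate (lastState k) (firstState k) *
        (Tmat k l).adjugate (firstState k) (lastState k) := by
  rw [Tmat_succ, det_submatrix_equiv_self, Jmat_eq_single, Jmat'_eq_single,
    det_fromBlocks_single_single, sq]

theorem adjugate_Tmat_succ_first_first :
    (Tmat (k + 1) l).adjugate (firstState (k + 1)) (firstState (k + 1)) =
      (Tmat k l).adjugate (firstState k) (firstState k) * (Tmat k l).det := by
  rw [Tmat_succ, adjugate_submatrix_equiv_self, submatrix_apply, blockEquiv_symm_firstState,
    Jmat_eq_single, Jmat'_eq_single, adjugate_fromBlocks_single_single_inl_inl]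

theorem adjugate_Tmat_succ_last_last :
    (Tmat (k + 1) l).adjugate (lastState (k + 1)) (lastState (k + 1)) =
      (Tmat k l).det * (Tmat k l).adjugate (lastState k) (lastState k) := by
  rw [Tmat_succ, adjugate_submatrix_equiv_self, submatrix_apply, blockEquiv_symm_lastState,
    Jmat_eq_single, Jmat'_eq_single, adjugate_fromBlocks_single_single_inr_inr]

theorem adjugate_Tmat_succ_last_first :
    (Tmat (k + 1) l).adjugate (lastState (k + 1)) (firstState (k + 1)) =
      -((Tmat k l).adjugate (lastState k) (firstState k) *
        (Tmat k l).adjugate (lastState k) (lastState k)) := by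
  rw [Tmat_succ, adjugate_submatrix_equiv_self, submatrix_apply, blockEquiv_symm_firstState,
    blockEquiv_symm_lastState, Jmat_eq_single, Jmat'_eq_single,
    adjugate_fromBlocks_single_single_inr_inl]

theorem adjugate_Tmat_succ_first_last :
    (Tmat (k + 1) l).adjugate (firstState (k + 1)) (lastState (k + 1)) =
      -((Tmat k l).adjugate (firstState k) (firstState k) *
        (Tmat k l).adjugate (firstState k) (lastState k)) := by
  rw [Tmat_succ, adjugate_submatrix_equiv_self, submatrix_apply, blockEquiv_symm_firstState,
    blockEquiv_symm_lastState, Jmat_eq_single, Jmat'_eq_single,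
    adjugate_fromBlocks_single_single_inl_inr]

end Recursion

theorem det_Tmat_and_corner_adjugates (k : ℕ) (l : ℝ) :
    (Tmat k l).det = (U ℝ (k + 1)).eval (-l / 2) * chebyshevUProd (-l / 2) k ∧
    (Tmat k l).adjugate (firstState k) (firstState k) =
      (U ℝ k).eval (-l / 2) * chebyshevUProd (-l / 2) k ∧
    (Tmat k l).adjugate (lastState k) (lastState k) =
      (U ℝ k).eval (-l / 2) * chebyshevUProd (-l / 2) k ∧
    (Tmat k l).adjugate (lastState k) (firstState k) *
      (Tmat k l).adjugate (firstState k) (lastState k) = chebyshevUProd (-l / 2) k ^ 2 := by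
  induction k with
  | zero =>
    have hlast : lastState 0 = firstState 0 := rfl
    have hdet : (Tmat 0 l).det = -l := by simp [Tmat, Amat]
    have hadj : (Tmat 0 l).adjugate (firstState 0) (firstState 0) = 1 := by simp [Tmat, Amat]
    rw [hlast, hdet, hadj, chebyshevUProd_zero]
    norm_num [U_one, U_zero, mul_div_cancel₀]
  | succ k ih =>
    obtain ⟨hdet, hfirst, hlast, hcross⟩ := ih
    have hcassini := U_eval_sq_add_U_eval_sq (-l / 2) k
    have hrec := congrArg (eval (-l / 2)) (U_add_one ℝ ((k : ℤ) + 1))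
    simp only [eval_sub, eval_mul, eval_X, eval_ofNat, add_sub_cancel_right] at hrec
    rw [det_Tmat_succ, adjugate_Tmat_succ_first_first, adjugate_Tmat_succ_last_last,
      adjugate_Tmat_succ_last_first, adjugate_Tmat_succ_first_last, chebyshevUProd_succ, hdet,
      hfirst, hlast]
    push_cast
    refine ⟨?_, by ring, by ring, ?_⟩
    · rw [hcross]
      linear_combination chebyshevUProd (-l / 2) k ^ 2 * hcassini -
        (U ℝ k).eval (-l / 2) * chebyshevUProd (-l / 2) k ^ 2 * hrec
    · linear_combination ((U ℝ k).eval (-l / 2) * chebyshevUProd (-l / 2) k) ^ 2 * hcross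

/-- The characteristic polynomial of `A_N'` equals
`χ_N'(λ) = (2-λ) * U_N(-λ/2) * ∏_{i=0}^{N-1} (U_i(-λ/2))^(2^(N-i-1))` for all `N ≥ 1`. -/
theorem chiA'_eq_chebyshev (N : ℕ) (hN : 1 ≤ N) (l : ℝ) :
    (Amat' N - l • 1).det = (2 - l) * (Polynomial.Chebyshev.U ℝ N).eval (-l / 2) *
      ∏ i ∈ Finset.range N, ((Polynomial.Chebyshev.U ℝ i).eval (-l / 2)) ^ (2 ^ (N - i - 1)) := by
  obtain ⟨k, rfl⟩ := Nat.exists_eq_add_of_le' hN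
  obtain ⟨hdet, hfirst, hlast, hcross⟩ := det_Tmat_and_corner_adjugates k l
  have hcassini := U_eval_sq_add_U_eval_sq (-l / 2) k
  rw [Amat'_sub_smul_one_succ, det_submatrix_equiv_self, Jmat_eq_single, Jmat'_eq_single,
    det_fromBlocks_single_single, det_add_single, det_add_single, adjugate_add_single_apply,
    adjugate_add_single_apply, hdet, hfirst, hlast, hcross]
  change _ = _ * chebyshevUProd (-l / 2) (k + 1)
  rw [chebyshevUProd_succ]
  push_cast
  linear_combination chebyshevUProd (-l / 2) k ^ 2 * hcassini
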